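/- arXiv:1309.6664 — 2 statements merged into one kernel-verified Lean document; each statement's English description precedes it below -/
import Mathlib

section
/- Lower bound on the number of non-real roots: for every nonzero real polynomial P of degree n, the number of non-real complex roots of P, counted with multiplicity, is at least n − z⁰(P) − v(P) − c(P). -/
open Polynomial

/-- Number of sign changes in a list of reals, after discarding zero entries:
the number of consecutive pairs with negative product. -/
noncomputable def signChanges (l : List ℝ) : ℕ :=
  let l' := l.filter (fun x => decide (x ≠ 0))
  (l'.zip l'.tail).countP (fun p => decide (p.1 * p.2 < 0))

/-- `v(P)`: number of sign changes in the sequence of nonzero coefficients of `P`,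
listed in order of increasing degree. -/
noncomputable def v (P : Polynomial ℝ) : ℕ :=
  signChanges (List.ofFn fun i : Fin (P.natDegree + 1) => P.coeff i)

/-- `c(P) := v(P(-X))`: the number of sign permanences of `P` (minimization convention). -/
noncomputable def c (P : Polynomial ℝ) : ℕ :=
  v (P.comp (-Polynomial.X))

/-- `z⁺(P)`: number of positive real roots of `P`, with multiplicity. -/
noncomputable def zpos (P : Polynomial ℝ) : ℕ :=
  (P.roots.filter (fun x => 0 < x)).card

/-- `z⁻(P)`: number of negative real roots of `P`, with multiplicity. -/
noncomputable def zneg (P : Polynomial ℝ) : ℕ :=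
  (P.roots.filter (fun x => x < 0)).card

/-! Descartes' rule of signs (`Polynomial.roots_countP_pos_le_signVariations`) bounds the positive
roots of `P` by `v P`, and applied to `P(-X)` bounds the negative roots by `c P`. Together with the
`z⁰(P)` roots at `0` these are all the real roots, and the roots of `P` over `ℂ`, of which there
are `deg P`, consist of the real ones and the non-real ones. What remains is to identify `v` with
`Polynomial.signVariations`, which reads the coefficients from the top down and counts sign
changes through `List.destutter`. -/

namespace List

variable {α : Type*}

theorem zip_tail_eq_zip_dropLast_tail (l : List α) : l.zip l.tail = l.dropLast.zip l.tail := by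
  induction l with
  | nil => rfl
  | cons a l ih => cases l <;> simp_all

theorem countP_zip_tail_reverse (p : α × α → Bool) (l : List α) :
    (l.reverse.zip l.reverse.tail).countP p = (l.zip l.tail).countP (p ∘ Prod.swap) := by
  have hlen : l.tail.length = l.dropLast.length := by simp
  rw [zip_tail_eq_zip_dropLast_tail, zip_tail_eq_zip_dropLast_tail l, dropLast_reverse,
    tail_reverse, zip, ← reverse_zipWith hlen, ← zip, countP_reverse, ← zip_swap, countP_map]

theorem length_destutter'_ne [DecidableEq α] (a : α) (l : List α) :
    (l.destutter' (· ≠ ·) a).length = ((a :: l).zip l).countP (fun q => q.1 ≠ q.2) + 1 := by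
  induction l generalizing a with
  | nil => simp
  | cons b l ih =>
    rw [destutter'_cons]
    by_cases hab : a = b
    · subst hab; simp [ih]
    · simp [hab, ih]

theorem length_destutter_ne_sub_one [DecidableEq α] (l : List α) :
    (l.destutter (· ≠ ·)).length - 1 = (l.zip l.tail).countP (fun q => q.1 ≠ q.2) := by
  cases l with
  | nil => rfl
  | cons a l => simp [destutter_cons', length_destutter'_ne]

end List

theorem Multiset.card_eq_countP_gt_add_countP_lt_add_count {α : Type*} [LinearOrder α] (a : α)
    (s : Multiset α) : card s = s.countP (a < ·) + s.countP (· < a) + s.count a := by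
  induction s using Multiset.induction_on with
  | empty => simp
  | cons b s ih =>
    rcases lt_trichotomy a b with h | rfl | h
    · simp [h, h.not_gt, h.ne, ih]; omega
    · simp [ih]; omega
    · simp [h, h.not_gt, h.ne', ih]; omega

theorem mul_neg_iff_sign_ne {R : Type*} [Ring R] [LinearOrder R] [IsStrictOrderedRing R]
    {a b : R} (ha : a ≠ 0) (hb : b ≠ 0) : a * b < 0 ↔ SignType.sign a ≠ SignType.sign b := by
  rw [← sign_eq_neg_one_iff, sign_mul]
  rcases ha.lt_or_gt with ha | ha <;> rcases hb.lt_or_gt with hb | hb <;>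
    simp only [sign_neg, sign_pos, ha, hb] <;> decide

theorem Complex.mem_range_algebraMap_iff (z : ℂ) : z ∈ (algebraMap ℝ ℂ).range ↔ z.im = 0 :=
  ⟨by rintro ⟨x, rfl⟩; simp, fun h => ⟨z.re, Complex.ext (by simp) (by simp [h])⟩⟩

theorem Polynomial.coeffList_eq_reverse_ofFn {R : Type*} [Semiring R] {P : R[X]} (hP : P ≠ 0) :
    P.coeffList = (List.ofFn fun i : Fin (P.natDegree + 1) => P.coeff i).reverse := by
  rw [coeffList, withBotSucc_degree_eq_natDegree_add_one hP, List.map_reverse]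
  congr 1
  apply List.ext_getElem <;> simp [-List.ofFn_succ]

theorem signChanges_reverse (l : List ℝ) : signChanges l.reverse = signChanges l := by
  simp only [signChanges, List.filter_reverse, List.countP_zip_tail_reverse]
  congr 1
  funext q
  simp [mul_comm]

theorem signChanges_eq_length_destutter (l : List ℝ) :
    signChanges l = (((l.map SignType.sign).filter (· ≠ 0)).destutter (· ≠ ·)).length - 1 := by
  have hfilter : (l.map SignType.sign).filter (· ≠ 0) = (l.filter (· ≠ 0)).map SignType.sign := by
    simp [List.filter_map, Function.comp_def]
  rw [hfilter, List.length_destutter_ne_sub_one, ← List.map_tail, List.zip_map, List.countP_map,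
    signChanges]
  refine List.countP_congr fun q hq => ?_
  obtain ⟨h1, h2⟩ := List.of_mem_zip hq
  have hq1 : q.1 ≠ 0 := by simpa using List.of_mem_filter h1
  have hq2 : q.2 ≠ 0 := by simpa using List.of_mem_filter (List.mem_of_mem_tail h2)
  simpa using mul_neg_iff_sign_ne hq1 hq2

theorem v_eq_signVariations (P : ℝ[X]) : v P = P.signVariations := by
  rcases eq_or_ne P 0 with rfl | hP
  · simp [v, signChanges]
  · rw [v, ← signChanges_reverse, ← coeffList_eq_reverse_ofFn hP]
    exact signChanges_eq_length_destutter _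

theorem roots_countP_pos_le_v (P : ℝ[X]) : P.roots.countP (0 < ·) ≤ v P :=
  v_eq_signVariations P ▸ roots_countP_pos_le_signVariations P

theorem roots_countP_neg_le_c (P : ℝ[X]) : P.roots.countP (· < 0) ≤ c P := by
  have h := roots_countP_pos_le_v (P.comp (-X))
  rw [roots_comp_neg_X, Multiset.countP_map] at h
  simpa [c, Multiset.countP_eq_card_filter] using h

theorem card_roots_add_card_nonreal_roots (P : ℝ[X]) :
    Multiset.card P.roots + ((P.map (algebraMap ℝ ℂ)).roots.filter (fun z => z.im ≠ 0)).card =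
      P.natDegree := by
  classical
  set f := algebraMap ℝ ℂ
  have hnonreal : (P.map f).roots.filter (fun z => z.im ≠ 0) =
      (P.map f).roots.filter (fun z => ¬ z ∈ f.range) :=
    Multiset.filter_congr fun z _ => by rw [Complex.mem_range_algebraMap_iff]
  rw [hnonreal, ← P.roots.card_map f, ← Multiset.card_add,
    ← filter_roots_map_range_eq_map_roots f.injective, Multiset.filter_add_not, ← natDegree_map f,
    (IsAlgClosed.splits (P.map f)).natDegree_eq_card_roots]

theorem nonreal_roots_lower_bound_general (P : Polynomial ℝ) :
    (P.natDegree : ℤ) - P.rootMultiplicity 0 - v P - c P ≤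
      (((P.map (algebraMap ℝ ℂ)).roots.filter (fun z => z.im ≠ 0)).card : ℤ) := by
  have hreal := P.roots.card_eq_countP_gt_add_countP_lt_add_count 0
  rw [count_roots] at hreal
  have hpos := roots_countP_pos_le_v P
  have hneg := roots_countP_neg_le_c P
  have hdeg := card_roots_add_card_nonreal_roots P
  omega

/-- Lower bound on the number of non-real roots: the number of non-real complex roots
of `P`, with multiplicity, is at least `deg(P) - z⁰(P) - v(P) - c(P)`. -/
theorem nonreal_roots_lower_bound (P : Polynomial ℝ) (hP : P ≠ 0) :
    (P.natDegree : ℤ) - P.rootMultiplicity 0 - v P - c P ≤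
      (((P.map (algebraMap ℝ ℂ)).roots.filter (fun z => z.im ≠ 0)).card : ℤ) :=
  nonreal_roots_lower_bound_general P
end

section
/- Generalized Budan's rule: let f : [a, b] → ℝ be a function that is n times differentiable on [a, b] (one-sidedly at the endpoints), such that the n-th derivative f⁽ⁿ⁾ never vanishes and has constant sign on [a, b], and such that f(a) ≠ 0. Then the number of zeros of f in [a, b], counted with multiplicity, is at most v(f, a, n) − v(f, b, n). -/
/-- `v(f, t, n)`: number of sign changes in the sequence `(f(t), f'(t), …, f⁽ⁿ⁾(t))`
after deleting its zero entries, where the derivatives are taken within the set `s`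
(one-sidedly at its endpoints). -/
noncomputable def vF (n : ℕ) (f : ℝ → ℝ) (s : Set ℝ) (t : ℝ) : ℕ :=
  signChanges (List.ofFn fun i : Fin (n + 1) => iteratedDerivWithin (i : ℕ) f s t)

/-!
Let `V(t) = v(f, t, n) + (zeros of f in [a, t], with multiplicity)`; we show `V` is
non-increasing on `[a, b]`, which gives the claim since `f(a) ≠ 0`. Because `f⁽ⁿ⁾` has constant
sign, downward induction on `i` (using that `f⁽ⁱ⁾` is monotone near `t₀` when `f⁽ⁱ⁾(t₀) = 0`)
shows: just to the right of `t₀`, `f⁽ⁱ⁾` has the sign of the first nonzero `f⁽ʲ⁾(t₀)`, `j ≥ i`, so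
`v` does not change there; just to the left it has the sign of `(-1)^(j-i) f⁽ʲ⁾(t₀)`, so `v` is
larger there by at least the multiplicity of `t₀` as a zero of `f`.
-/

open Set Topology Filter

noncomputable def firstNonzero : List ℝ → ℝ
  | [] => 0
  | y :: l => if y = 0 then firstNonzero l else y

/-- `(-1)^j * l[j]` for the first nonzero entry `l[j]`: when `l` lists the derivatives of a function
at `t₀`, the function has this sign just to the left of `t₀`. -/
noncomputable def altFirstNonzero : List ℝ → ℝ
  | [] => 0
  | y :: l => if y = 0 then -altFirstNonzero l else y

theorem headI_filter_ne_zero (l : List ℝ) :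
    (l.filter fun x => decide (x ≠ 0)).headI = firstNonzero l := by
  induction l with
  | nil => rfl
  | cons y l ih =>
    by_cases hy : y = 0
    · rw [List.filter_cons_of_neg (by simp [hy]), ih, firstNonzero, if_pos hy]
    · rw [List.filter_cons_of_pos (by simp [hy]), firstNonzero, if_neg hy, List.headI_cons]

theorem signChanges_cons (x : ℝ) (l : List ℝ) :
    signChanges (x :: l) = signChanges l + if x * firstNonzero l < 0 then 1 else 0 := by
  by_cases hx : x = 0
  · rw [signChanges, List.filter_cons_of_neg (by simp [hx])]
    simp [hx, signChanges]
  · rw [← headI_filter_ne_zero]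
    unfold signChanges
    rw [List.filter_cons_of_pos (by simp [hx])]
    rcases l.filter (fun x => decide (x ≠ 0)) with _ | ⟨y, R⟩
    · simp [show (default : ℝ) = 0 from rfl]
    · simp only [List.tail_cons, List.zip_cons_cons, List.countP_cons, List.headI_cons]
      congr 2
      simp

theorem mul_neg_iff_of_pos_mul {x y x' y' : ℝ} (h : 0 < x * y) (h' : 0 < x' * y') :
    x * x' < 0 ↔ y * y' < 0 := by
  have := mul_pos h h'
  constructor <;> intro <;> nlinarith

theorem firstNonzero_cons_of_ne_zero {x : ℝ} (hx : x ≠ 0) (l : List ℝ) :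
    firstNonzero (x :: l) = x := if_neg hx

theorem signChanges_eq_of_pos_mul_firstNonzero {σ p : List ℝ} (hlen : p.length = σ.length)
    (h : ∀ i (hi : i < p.length), 0 < p[i] * firstNonzero (σ.drop i)) :
    signChanges p = signChanges σ := by
  induction σ generalizing p with
  | nil => simp_all
  | cons y σ ih =>
    obtain _ | ⟨x, p⟩ := p
    · simp at hlen
    have hx : 0 < x * firstNonzero (y :: σ) := h 0 (by simp)
    have htail : ∀ i (hi : i < p.length), 0 < p[i] * firstNonzero (σ.drop i) :=
      fun i hi => h (i + 1) (by simp [hi])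
    rw [signChanges_cons, signChanges_cons, ih (by simpa using hlen) htail]
    obtain _ | ⟨x', p⟩ := p
    · obtain rfl : σ = [] := List.eq_nil_of_length_eq_zero (by simpa using hlen.symm)
      simp [firstNonzero]
    have hx' : 0 < x' * firstNonzero σ := htail 0 (by simp)
    rw [firstNonzero_cons_of_ne_zero (left_ne_zero_of_mul hx'.ne')]
    by_cases hy : y = 0
    · rw [firstNonzero, if_pos hy] at hx
      simp [hy, mul_neg_iff_of_pos_mul hx hx', not_lt.2 (mul_self_nonneg _)]
    · rw [firstNonzero_cons_of_ne_zero hy] at hx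
      simp only [mul_neg_iff_of_pos_mul hx hx']

theorem altFirstNonzero_cons_of_ne_zero {x : ℝ} (hx : x ≠ 0) (l : List ℝ) :
    altFirstNonzero (x :: l) = x := if_neg hx

theorem signChanges_add_le_of_pos_mul_altFirstNonzero {σ p : List ℝ} {μ : ℕ}
    (hlen : p.length = σ.length)
    (h : ∀ i (hi : i < p.length), 0 < p[i] * altFirstNonzero (σ.drop i))
    (hμ : ∀ i < μ, σ[i]? = some 0) :
    signChanges σ + μ ≤ signChanges p := by
  induction σ generalizing p μ with
  | nil =>
    obtain rfl : μ = 0 := by by_contra hμ0; simpa using hμ 0 (by omega)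
    simp [signChanges]
  | cons y σ ih =>
    obtain _ | ⟨x, p⟩ := p
    · simp at hlen
    have hx : 0 < x * altFirstNonzero (y :: σ) := h 0 (by simp)
    have htail : ∀ i (hi : i < p.length), 0 < p[i] * altFirstNonzero (σ.drop i) :=
      fun i hi => h (i + 1) (by simp [hi])
    have hlen' : p.length = σ.length := by simpa using hlen
    rw [signChanges_cons, signChanges_cons]
    obtain _ | ⟨x', p⟩ := p
    · obtain rfl : σ = [] := List.eq_nil_of_length_eq_zero (by simpa using hlen'.symm)
      obtain rfl : μ = 0 := by
        by_contra hμ0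
        have hy : y = 0 := by simpa using hμ 0 (by omega)
        simp [altFirstNonzero, hy] at hx
      simp [firstNonzero]
    have hx' : 0 < x' * altFirstNonzero σ := htail 0 (by simp)
    have hA : altFirstNonzero σ ≠ 0 := right_ne_zero_of_mul hx'.ne'
    rw [firstNonzero_cons_of_ne_zero (left_ne_zero_of_mul hx'.ne')]
    by_cases hy : y = 0
    · rw [altFirstNonzero, if_pos hy] at hx
      have hxx' : x * x' < 0 :=
        (mul_neg_iff_of_pos_mul hx hx').2 (by nlinarith [mul_self_pos.2 hA])
      have := ih hlen' htail (μ := μ - 1) fun i hi => by simpa using hμ (i + 1) (by omega)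
      simp only [hy, zero_mul, lt_irrefl, if_false, if_pos hxx']
      omega
    obtain rfl : μ = 0 := by by_contra hμ0; simpa [hy] using hμ 0 (by omega)
    rw [altFirstNonzero_cons_of_ne_zero hy] at hx
    obtain _ | ⟨y', σ⟩ := σ
    · simp at hlen'
    by_cases hy' : y' = 0
    · have := ih hlen' htail (μ := 1) (by simp [hy'])
      split_ifs <;> omega
    · rw [altFirstNonzero_cons_of_ne_zero hy'] at hx'
      have := ih hlen' htail (μ := 0) (by simp)
      simp only [firstNonzero_cons_of_ne_zero hy', mul_neg_iff_of_pos_mul hx hx']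
      omega

theorem strictMonoOn_mul_const_of_hasDerivAt {φ φ' : ℝ → ℝ} {x y c : ℝ}
    (hcont : ContinuousOn φ (Icc x y))
    (hderiv : ∀ u ∈ Ioo x y, HasDerivAt φ (φ' u) u ∧ 0 < φ' u * c) :
    StrictMonoOn (fun u => φ u * c) (Icc x y) :=
  strictMonoOn_of_hasDerivWithinAt_pos (convex_Icc x y) (hcont.mul continuousOn_const)
    (fun u hu => by
      rw [interior_Icc] at hu ⊢
      exact ((hderiv u hu).1.mul_const c).hasDerivWithinAt)
    (fun u hu => by rw [interior_Icc] at hu; exact (hderiv u hu).2)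

theorem le_of_eventually_nhdsLT_of_eventually_nhdsGT {β : Type*} [Preorder β] {V : ℝ → β}
    {a b : ℝ} (hab : a ≤ b) (hL : ∀ t ∈ Ioc a b, ∀ᶠ s in 𝓝[<] t, V t ≤ V s)
    (hR : ∀ t ∈ Ico a b, ∀ᶠ s in 𝓝[>] t, V s ≤ V t) : V b ≤ V a := by
  set S := {t ∈ Icc a b | V t ≤ V a}
  have haS : a ∈ S := ⟨left_mem_Icc.2 hab, le_rfl⟩
  have hbdd : BddAbove S := ⟨b, fun t ht => ht.1.2⟩
  set c := sSup S
  have hac : a ≤ c := le_csSup hbdd haS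
  have hcb : c ≤ b := csSup_le ⟨a, haS⟩ fun t ht => ht.1.2
  have hc : V c ≤ V a := by
    obtain hac | hac := hac.eq_or_lt
    · rw [← hac]
    obtain ⟨l, hl, hsub⟩ := mem_nhdsLT_iff_exists_Ioo_subset.1 (hL c ⟨hac, hcb⟩)
    obtain ⟨t, htS, hlt⟩ := exists_lt_of_lt_csSup ⟨a, haS⟩ hl
    obtain htc | htc := (le_csSup hbdd htS).eq_or_lt
    · rw [htc] at htS
      exact htS.2
    · exact (hsub ⟨hlt, htc⟩).trans htS.2
  obtain hcb | hcb := hcb.eq_or_lt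
  · rwa [← hcb]
  obtain ⟨u, hu, hsub⟩ := mem_nhdsGT_iff_exists_Ioo_subset.1 (hR c ⟨hac, hcb⟩)
  obtain ⟨t, hct, htu⟩ := exists_between (lt_min hu hcb)
  have htS : t ∈ S := ⟨⟨hac.trans hct.le, htu.le.trans (min_le_right _ _)⟩,
    (hsub ⟨hct, htu.trans_le (min_le_left _ _)⟩).trans hc⟩
  exact absurd (le_csSup hbdd htS) (not_le.2 hct)

namespace Finset

theorem eventually_nhdsGT_filter_le_eq (Z : Finset ℝ) (t₀ : ℝ) :
    ∀ᶠ t in 𝓝[>] t₀, Z.filter (· ≤ t) = Z.filter (· ≤ t₀) := by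
  have : ∀ᶠ t in 𝓝[>] t₀, ∀ α ∈ Z, (α ≤ t ↔ α ≤ t₀) := by
    refine (eventually_all_finset Z).2 fun α _ => ?_
    obtain h | h := le_or_gt α t₀
    · filter_upwards [self_mem_nhdsWithin] with t ht using iff_of_true (h.trans (le_of_lt ht)) h
    · filter_upwards [nhdsWithin_le_nhds (eventually_lt_nhds h)] with t ht
      exact iff_of_false (not_le.2 ht) (not_le.2 h)
  filter_upwards [this] with t ht using filter_congr ht

theorem eventually_nhdsLT_filter_le_eq (Z : Finset ℝ) (t₀ : ℝ) :
    ∀ᶠ t in 𝓝[<] t₀, Z.filter (· ≤ t) = Z.filter (· < t₀) := by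
  have : ∀ᶠ t in 𝓝[<] t₀, ∀ α ∈ Z, (α ≤ t ↔ α < t₀) := by
    refine (eventually_all_finset Z).2 fun α _ => ?_
    obtain h | h := lt_or_ge α t₀
    · filter_upwards [nhdsWithin_le_nhds (eventually_gt_nhds h)] with t ht
      exact iff_of_true ht.le h
    · filter_upwards [self_mem_nhdsWithin] with t ht
      exact iff_of_false (not_le.2 ((show t < t₀ from ht).trans_le h)) (not_lt.2 h)
  filter_upwards [this] with t ht using filter_congr ht

theorem sum_filter_le_eq_sum_filter_lt_add {M : Type*} [AddCommMonoid M] (Z : Finset ℝ)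
    (w : ℝ → M) (t : ℝ) :
    ∑ α ∈ Z with α ≤ t, w α = ∑ α ∈ Z with α < t, w α + if t ∈ Z then w t else 0 := by
  rw [sum_filter, sum_filter, ← sum_ite_eq' Z t w, ← sum_add_distrib]
  refine sum_congr rfl fun α _ => ?_
  obtain h | rfl | h := lt_trichotomy α t
  · simp [h, h.le, h.ne]
  · simp
  · simp [not_le.2 h, not_lt.2 h.le, h.ne']

end Finset

section DerivativeChain

variable {g : ℕ → ℝ → ℝ} {n : ℕ} {a b t₀ : ℝ}

theorem eventually_nhdsGT_pos_mul_firstNonzero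
    (hcont : ∀ i < n, ContinuousOn (g i) (Icc a b))
    (hderiv : ∀ i < n, ∀ u ∈ Ioo a b, HasDerivAt (g i) (g (i + 1) u) u)
    (hsign : ∀ x ∈ Icc a b, ∀ y ∈ Icc a b, 0 < g n x * g n y)
    (ht₀ : t₀ ∈ Ico a b) {i : ℕ} (hi : i ≤ n) :
    ∀ᶠ t in 𝓝[>] t₀,
      0 < g i t * firstNonzero ((List.ofFn fun k : Fin (n + 1) => g k t₀).drop i) := by
  have hnhds : ∀ᶠ t in 𝓝[>] t₀, t ∈ Ioo t₀ b := Ioo_mem_nhdsGT ht₀.2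
  have ht₀' : t₀ ∈ Icc a b := Ico_subset_Icc_self ht₀
  induction hi using Nat.decreasingInduction with
  | self =>
    rw [List.drop_eq_getElem_cons (by simp), List.getElem_ofFn,
      firstNonzero_cons_of_ne_zero (right_ne_zero_of_mul (hsign t₀ ht₀' t₀ ht₀').ne')]
    filter_upwards [hnhds] with t ht
    exact hsign t ⟨ht₀.1.trans ht.1.le, ht.2.le⟩ t₀ ht₀'
  | of_succ i hi ih =>
    rw [List.drop_eq_getElem_cons (by simp; omega), List.getElem_ofFn]
    by_cases h0 : g i t₀ = 0
    · rw [firstNonzero, if_pos h0]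
      obtain ⟨u, hu, hsub⟩ := mem_nhdsGT_iff_exists_Ioo_subset.1 (ih.and hnhds)
      filter_upwards [Ioo_mem_nhdsGT hu] with t ht
      have htb : t < b := (hsub ⟨ht.1, ht.2⟩).2.2
      have hmono := strictMonoOn_mul_const_of_hasDerivAt (x := t₀) (y := t)
        ((hcont i hi).mono (Icc_subset_Icc ht₀.1 htb.le))
        fun v hv => ⟨hderiv i hi v ⟨ht₀.1.trans_lt hv.1, hv.2.trans htb⟩,
          (hsub ⟨hv.1, hv.2.trans ht.2⟩).1⟩
      simpa [h0] using hmono (left_mem_Icc.2 ht.1.le) (right_mem_Icc.2 ht.1.le) ht.1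
    · rw [firstNonzero_cons_of_ne_zero h0]
      have hcont_right : ContinuousWithinAt (g i) (Ioi t₀) t₀ :=
        ((hcont i hi).continuousWithinAt ht₀').mono_of_mem_nhdsWithin
          (mem_of_superset hnhds (Ioo_subset_Icc_self.trans (Icc_subset_Icc ht₀.1 le_rfl)))
      exact (hcont_right.tendsto.mul_const (g i t₀)).eventually_const_lt (mul_self_pos.2 h0)


theorem eventually_nhdsLT_pos_mul_altFirstNonzero
    (hcont : ∀ i < n, ContinuousOn (g i) (Icc a b))
    (hderiv : ∀ i < n, ∀ u ∈ Ioo a b, HasDerivAt (g i) (g (i + 1) u) u)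
    (hsign : ∀ x ∈ Icc a b, ∀ y ∈ Icc a b, 0 < g n x * g n y)
    (ht₀ : t₀ ∈ Ioc a b) {i : ℕ} (hi : i ≤ n) :
    ∀ᶠ t in 𝓝[<] t₀,
      0 < g i t * altFirstNonzero ((List.ofFn fun k : Fin (n + 1) => g k t₀).drop i) := by
  have hnhds : ∀ᶠ t in 𝓝[<] t₀, t ∈ Ioo a t₀ := Ioo_mem_nhdsLT ht₀.1
  have ht₀' : t₀ ∈ Icc a b := Ioc_subset_Icc_self ht₀
  induction hi using Nat.decreasingInduction with
  | self =>
    rw [List.drop_eq_getElem_cons (by simp), List.getElem_ofFn,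
      altFirstNonzero_cons_of_ne_zero (right_ne_zero_of_mul (hsign t₀ ht₀' t₀ ht₀').ne')]
    filter_upwards [hnhds] with t ht
    exact hsign t ⟨ht.1.le, ht.2.le.trans ht₀.2⟩ t₀ ht₀'
  | of_succ i hi ih =>
    rw [List.drop_eq_getElem_cons (by simp; omega), List.getElem_ofFn]
    by_cases h0 : g i t₀ = 0
    · rw [altFirstNonzero, if_pos h0]
      simp only [mul_neg, neg_pos]
      obtain ⟨l, hl, hsub⟩ := mem_nhdsLT_iff_exists_Ioo_subset.1 (ih.and hnhds)
      filter_upwards [Ioo_mem_nhdsLT hl] with t ht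
      have hat : a < t := (hsub ⟨ht.1, ht.2⟩).2.1
      have hmono := strictMonoOn_mul_const_of_hasDerivAt (x := t) (y := t₀)
        ((hcont i hi).mono (Icc_subset_Icc hat.le ht₀.2))
        fun v hv => ⟨hderiv i hi v ⟨hat.trans hv.1, hv.2.trans_le ht₀.2⟩,
          (hsub ⟨ht.1.trans hv.1, hv.2⟩).1⟩
      simpa [h0] using hmono (left_mem_Icc.2 ht.2.le) (right_mem_Icc.2 ht.2.le) ht.2
    · rw [altFirstNonzero_cons_of_ne_zero h0]
      have hcont_left : ContinuousWithinAt (g i) (Iio t₀) t₀ :=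
        ((hcont i hi).continuousWithinAt ht₀').mono_of_mem_nhdsWithin
          (mem_of_superset hnhds (Ioo_subset_Icc_self.trans (Icc_subset_Icc le_rfl ht₀.2)))
      exact (hcont_left.tendsto.mul_const (g i t₀)).eventually_const_lt (mul_self_pos.2 h0)

theorem eventually_nhdsGT_signChanges_eq
    (hcont : ∀ i < n, ContinuousOn (g i) (Icc a b))
    (hderiv : ∀ i < n, ∀ u ∈ Ioo a b, HasDerivAt (g i) (g (i + 1) u) u)
    (hsign : ∀ x ∈ Icc a b, ∀ y ∈ Icc a b, 0 < g n x * g n y) (ht₀ : t₀ ∈ Ico a b) :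
    ∀ᶠ t in 𝓝[>] t₀, signChanges (List.ofFn fun k : Fin (n + 1) => g k t) =
      signChanges (List.ofFn fun k : Fin (n + 1) => g k t₀) := by
  filter_upwards [eventually_all.2 fun k : Fin (n + 1) =>
    eventually_nhdsGT_pos_mul_firstNonzero hcont hderiv hsign ht₀ k.is_le] with t ht
  refine signChanges_eq_of_pos_mul_firstNonzero (by simp) fun i hi => ?_
  rw [List.getElem_ofFn]
  exact ht _

theorem eventually_nhdsLT_signChanges_add_le
    (hcont : ∀ i < n, ContinuousOn (g i) (Icc a b))
    (hderiv : ∀ i < n, ∀ u ∈ Ioo a b, HasDerivAt (g i) (g (i + 1) u) u)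
    (hsign : ∀ x ∈ Icc a b, ∀ y ∈ Icc a b, 0 < g n x * g n y) (ht₀ : t₀ ∈ Ioc a b)
    {μ : ℕ} (hμ : ∀ i < μ, g i t₀ = 0) :
    ∀ᶠ t in 𝓝[<] t₀, signChanges (List.ofFn fun k : Fin (n + 1) => g k t₀) + μ ≤
      signChanges (List.ofFn fun k : Fin (n + 1) => g k t) := by
  have ht₀' : t₀ ∈ Icc a b := Ioc_subset_Icc_self ht₀
  have hμn : μ ≤ n := by
    by_contra! h
    simpa [hμ n h] using hsign t₀ ht₀' t₀ ht₀'
  filter_upwards [eventually_all.2 fun k : Fin (n + 1) =>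
    eventually_nhdsLT_pos_mul_altFirstNonzero hcont hderiv hsign ht₀ k.is_le] with t ht
  refine signChanges_add_le_of_pos_mul_altFirstNonzero (by simp)
    (fun i hi => by rw [List.getElem_ofFn]; exact ht _) fun i hi => ?_
  rw [List.getElem?_ofFn]
  simp [show i < n + 1 by omega, hμ i hi]

theorem sum_multiplicity_le_signChanges_sub (hab : a ≤ b)
    (hcont : ∀ i < n, ContinuousOn (g i) (Icc a b))
    (hderiv : ∀ i < n, ∀ u ∈ Ioo a b, HasDerivAt (g i) (g (i + 1) u) u)
    (hsign : ∀ x ∈ Icc a b, ∀ y ∈ Icc a b, 0 < g n x * g n y)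
    {Z : Finset ℝ} (hZ : ∀ α ∈ Z, α ∈ Ioc a b) {μ : ℝ → ℕ} (hμ : ∀ α ∈ Z, ∀ i < μ α, g i α = 0) :
    ((∑ α ∈ Z, μ α : ℕ) : ℤ) ≤ (signChanges (List.ofFn fun k : Fin (n + 1) => g k a) : ℤ) -
      signChanges (List.ofFn fun k : Fin (n + 1) => g k b) := by
  let v : ℝ → ℕ := fun t => signChanges (List.ofFn fun k : Fin (n + 1) => g k t)
  let V : ℝ → ℤ := fun t => v t + ∑ α ∈ Z with α ≤ t, (μ α : ℤ)
  have hV : V b ≤ V a := by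
    refine le_of_eventually_nhdsLT_of_eventually_nhdsGT hab (fun t₀ ht₀ => ?_) fun t₀ ht₀ => ?_
    · have hμ₀ : ∀ i < (if t₀ ∈ Z then μ t₀ else 0), g i t₀ = 0 := by
        split_ifs with h
        exacts [hμ t₀ h, fun i hi => absurd hi (Nat.not_lt_zero i)]
      filter_upwards [eventually_nhdsLT_signChanges_add_le hcont hderiv hsign ht₀ hμ₀,
        Z.eventually_nhdsLT_filter_le_eq t₀] with t hvt hZt
      simp only [V, v, hZt, Finset.sum_filter_le_eq_sum_filter_lt_add _ _ t₀]
      split_ifs at hvt ⊢ <;> omega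
    · filter_upwards [eventually_nhdsGT_signChanges_eq hcont hderiv hsign ht₀,
        Z.eventually_nhdsGT_filter_le_eq t₀] with t hvt hZt
      simp only [V, v, hZt, hvt, le_refl]
  have hZa : Z.filter (· ≤ a) = ∅ :=
    Finset.filter_eq_empty_iff.2 fun α hα => not_le.2 (hZ α hα).1
  have hZb : Z.filter (· ≤ b) = Z := Finset.filter_true_of_mem fun α hα => (hZ α hα).2
  simp only [V, hZa, hZb, Finset.sum_empty, add_zero] at hV
  push_cast
  linarith

end DerivativeChain

theorem hasDerivAt_iteratedDerivWithin {f : ℝ → ℝ} {s : Set ℝ} {i : ℕ} {u : ℝ}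
    (hd : DifferentiableWithinAt ℝ (iteratedDerivWithin i f s) s u) (hs : s ∈ 𝓝 u) :
    HasDerivAt (iteratedDerivWithin i f s) (iteratedDerivWithin (i + 1) f s u) u := by
  rw [iteratedDerivWithin_succ]
  exact hd.hasDerivWithinAt.hasDerivAt hs

theorem generalized_budan_general (f : ℝ → ℝ) (a b : ℝ) (hab : a ≤ b) (n : ℕ)
    (hdiff : ∀ i < n, ∀ x ∈ Set.Icc a b,
      DifferentiableWithinAt ℝ (iteratedDerivWithin i f (Set.Icc a b)) (Set.Icc a b) x)
    (hsign : (∀ x ∈ Set.Icc a b, 0 < iteratedDerivWithin n f (Set.Icc a b) x) ∨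
             (∀ x ∈ Set.Icc a b, iteratedDerivWithin n f (Set.Icc a b) x < 0))
    (hfa : f a ≠ 0)
    (Z : Finset ℝ) (hZ : ∀ α ∈ Z, α ∈ Set.Icc a b ∧ f α = 0)
    (m : ℝ → ℕ)
    (hm : ∀ α ∈ Z, (∀ i < m α, iteratedDerivWithin i f (Set.Icc a b) α = 0) ∧
      iteratedDerivWithin (m α) f (Set.Icc a b) α ≠ 0) :
    ((∑ α ∈ Z, m α : ℕ) : ℤ) ≤
      (vF n f (Set.Icc a b) a : ℤ) - vF n f (Set.Icc a b) b := by
  have hcont : ∀ i < n, ContinuousOn (iteratedDerivWithin i f (Icc a b)) (Icc a b) :=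
    fun i hi x hx => (hdiff i hi x hx).continuousWithinAt
  have hderiv : ∀ i < n, ∀ u ∈ Ioo a b, HasDerivAt (iteratedDerivWithin i f (Icc a b))
      (iteratedDerivWithin (i + 1) f (Icc a b) u) u := fun i hi u hu =>
    hasDerivAt_iteratedDerivWithin (hdiff i hi u (Ioo_subset_Icc_self hu)) (Icc_mem_nhds hu.1 hu.2)
  have hsign' : ∀ x ∈ Icc a b, ∀ y ∈ Icc a b,
      0 < iteratedDerivWithin n f (Icc a b) x * iteratedDerivWithin n f (Icc a b) y := by
    obtain h | h := hsign
    · exact fun x hx y hy => mul_pos (h x hx) (h y hy)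
    · exact fun x hx y hy => mul_pos_of_neg_of_neg (h x hx) (h y hy)
  have hZ' : ∀ α ∈ Z, α ∈ Ioc a b := fun α hα => by
    obtain ⟨⟨haα, hαb⟩, hfα⟩ := hZ α hα
    exact ⟨haα.lt_of_ne (by rintro rfl; exact hfa hfα), hαb⟩
  exact sum_multiplicity_le_signChanges_sub hab hcont hderiv hsign' hZ' fun α hα => (hm α hα).1

/-- Generalized Budan's rule: if `f` is `n` times differentiable on `[a, b]`
(one-sidedly at the endpoints), its `n`-th derivative never vanishes and has constant
sign on `[a, b]`, and `f(a) ≠ 0`, then the number of zeros of `f` in `[a, b]`, counted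
with multiplicity, is at most `v(f, a, n) - v(f, b, n)`.  The zeros in `[a, b]` are
given as a finite set `Z` together with their multiplicities `m`. -/
theorem generalized_budan (f : ℝ → ℝ) (a b : ℝ) (hab : a ≤ b) (n : ℕ)
    (hdiff : ∀ i < n, ∀ x ∈ Set.Icc a b,
      DifferentiableWithinAt ℝ (iteratedDerivWithin i f (Set.Icc a b)) (Set.Icc a b) x)
    (hne : ∀ x ∈ Set.Icc a b, iteratedDerivWithin n f (Set.Icc a b) x ≠ 0)
    (hsign : (∀ x ∈ Set.Icc a b, 0 < iteratedDerivWithin n f (Set.Icc a b) x) ∨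
             (∀ x ∈ Set.Icc a b, iteratedDerivWithin n f (Set.Icc a b) x < 0))
    (hfa : f a ≠ 0)
    (Z : Finset ℝ) (hZ : ∀ α ∈ Z, α ∈ Set.Icc a b ∧ f α = 0)
    (m : ℝ → ℕ)
    (hm : ∀ α ∈ Z, (∀ i < m α, iteratedDerivWithin i f (Set.Icc a b) α = 0) ∧
      iteratedDerivWithin (m α) f (Set.Icc a b) α ≠ 0) :
    ((∑ α ∈ Z, m α : ℕ) : ℤ) ≤
      (vF n f (Set.Icc a b) a : ℤ) - vF n f (Set.Icc a b) b :=
  generalized_budan_general f a b hab n hdiff hsign hfa Z hZ m hm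
end
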